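/- Let u* : X → ℝ be a solution map that is continuous and piecewise affine on a polytope X ⊆ ℝ^n with affine selection functions A_1(x) = c_1^T x + d_1, ..., A_m(x) = c_m^T x + d_m (i.e., for every x ∈ X, u*(x) = A_j(x) for some j, and X is covered by finitely many polyhedra on each of which u* agrees with one A_j). Then there exist finitely many index sets C_1, ..., C_l ⊆ {1, ..., m} such that u*(x) = min_{1≤i≤l} max_{j ∈ C_i} (c_j^T x + d_j) for all x ∈ X. -/

import Mathlib

/-!
Along the segment from `x` to `y`, a continuous selection `f` of finitely many affine functions
is a continuous selection of affine functions of one variable. Following the last time up to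
which `f` stays below some `A j` that is active at `x` (i.e. `A j x ≤ f x`) shows that
`f y ≤ A j y` for one such `j`. Hence `f y` is the minimum over `x ∈ X` of the maximum of
`A j y` over the active set of `x`, and there are only finitely many active sets.
-/

open RealInnerProductSpace Set Filter Topology AffineMap

-- `lineMap a b - lineMap a' b'` is `≤ 0` at `t₀` and `> 0` at `t > t₀`, so it is increasing.
theorem le_of_lineMap_le_of_lineMap_lt {a b a' b' t₀ t : ℝ} (ht₀ : 0 ≤ t₀) (ht : t₀ < t)
    (hle : lineMap a b t₀ ≤ lineMap a' b' t₀) (hlt : lineMap a' b' t < lineMap a b t) :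
    a ≤ a' := by
  simp only [lineMap_apply_ring'] at hle hlt
  nlinarith [mul_nonneg ht₀ (sub_nonneg.2 ht.le)]

theorem exists_lineMap_le_le_of_continuousOn_Icc {ι : Type*} [Finite ι] {g : ℝ → ℝ}
    (p q : ι → ℝ) (hg : ContinuousOn g (Icc 0 1))
    (hsel : ∀ t ∈ Icc (0 : ℝ) 1, ∃ j, g t = lineMap (p j) (q j) t) :
    ∃ j, p j ≤ g 0 ∧ g 1 ≤ q j := by
  set S := ⋃ j ∈ {j | p j ≤ g 0}, {t ∈ Icc (0 : ℝ) 1 | g t ≤ lineMap (p j) (q j) t}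
  have hmemS {t} :
      t ∈ S ↔ t ∈ Icc (0 : ℝ) 1 ∧ ∃ j, p j ≤ g 0 ∧ g t ≤ lineMap (p j) (q j) t := by
    simp only [S, mem_iUnion₂, mem_ofPred_eq]
    tauto
  have hS_compact : IsCompact S :=
    isCompact_Icc.of_isClosed_subset
      ((toFinite _).isClosed_biUnion fun j _ ↦
        isClosed_Icc.isClosed_le hg (lineMap_continuous.continuousOn))
      fun t ht ↦ (hmemS.1 ht).1
  have hS_nonempty : S.Nonempty := by
    obtain ⟨j, hj⟩ := hsel 0 (left_mem_Icc.2 zero_le_one)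
    exact ⟨0, hmemS.2 ⟨left_mem_Icc.2 zero_le_one, j, by simpa using hj.ge, hj.le⟩⟩
  set t₀ := sSup S
  obtain ⟨⟨ht₀_nonneg, ht₀_le⟩, j, hj₀, hjt₀⟩ :
      t₀ ∈ Icc (0 : ℝ) 1 ∧ ∃ j, p j ≤ g 0 ∧ g t₀ ≤ lineMap (p j) (q j) t₀ :=
    hmemS.1 (hS_compact.sSup_mem hS_nonempty)
  suffices ht₀ : t₀ = 1 by
    rw [ht₀, lineMap_apply_one] at hjt₀
    exact ⟨j, hj₀, hjt₀⟩
  by_contra ht₀_ne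
  have ht₀_lt : t₀ < 1 := ht₀_le.lt_of_ne ht₀_ne
  have hIoc : Ioc t₀ 1 ⊆ Icc 0 1 := Ioc_subset_Icc_self.trans (Icc_subset_Icc_left ht₀_nonneg)
  have hnotS : ∀ t ∈ Ioc t₀ 1, t ∉ S := fun t ht htS ↦
    (le_csSup hS_compact.bddAbove htS).not_gt ht.1
  set L := 𝓝[Ioc t₀ 1] t₀
  have : L.NeBot := by
    rw [← mem_closure_iff_nhdsWithin_neBot, closure_Ioc ht₀_lt.ne]
    exact ⟨le_rfl, ht₀_lt.le⟩
  have hL : ∀ᶠ t in L, t ∈ Ioc t₀ 1 := self_mem_nhdsWithin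
  obtain ⟨k, hk⟩ : ∃ k, ∃ᶠ t in L, g t = lineMap (p k) (q k) t :=
    frequently_exists.1 (hL.mono fun t ht ↦ hsel t (hIoc ht)).frequently
  have hgk : g t₀ = lineMap (p k) (q k) t₀ :=
    tendsto_nhds_unique_of_frequently_eq
      ((hg t₀ ⟨ht₀_nonneg, ht₀_le⟩).mono_left (nhdsWithin_mono _ hIoc))
      (lineMap_continuous.continuousWithinAt) hk
  obtain ⟨t, hgt, ht⟩ := (hk.and_eventually hL).exists
  have hjt : lineMap (p j) (q j) t < g t :=
    not_le.1 fun h ↦ hnotS t ht (hmemS.2 ⟨hIoc ht, j, hj₀, h⟩)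
  have hpk : p k ≤ p j :=
    le_of_lineMap_le_of_lineMap_lt ht₀_nonneg ht.1 (hgk ▸ hjt₀) (hgt ▸ hjt)
  exact hnotS t ht (hmemS.2 ⟨hIoc ht, k, hpk.trans hj₀, hgt.le⟩)

theorem Convex.exists_affineMap_le_le_of_continuousOn {E ι : Type*} [AddCommGroup E]
    [Module ℝ E] [TopologicalSpace E] [IsTopologicalAddGroup E] [ContinuousSMul ℝ E] [Finite ι]
    {X : Set E} (hX : Convex ℝ X) {f : E → ℝ} (hf : ContinuousOn f X) (A : ι → E →ᵃ[ℝ] ℝ)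
    (hsel : ∀ x ∈ X, ∃ j, f x = A j x) {x y : E} (hx : x ∈ X) (hy : y ∈ X) :
    ∃ j, A j x ≤ f x ∧ f y ≤ A j y := by
  have hseg : ∀ t ∈ Icc (0 : ℝ) 1, lineMap x y t ∈ X := fun t ht ↦ hX.lineMap_mem hx hy ht
  have hsel' : ∀ t ∈ Icc (0 : ℝ) 1, ∃ j, f (lineMap x y t) = lineMap (A j x) (A j y) t :=
    fun t ht ↦ (hsel _ (hseg t ht)).imp fun j hj ↦ hj.trans (apply_lineMap _ _ _ _)
  simpa using exists_lineMap_le_le_of_continuousOn_Icc (fun j ↦ A j x) (fun j ↦ A j y)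
    (hf.comp lineMap_continuous.continuousOn hseg) hsel'

theorem Finset.inf'_sup'_eq_of_forall_exists_le {α κ ι : Type*} [Lattice α] {s : Finset κ}
    (hs : s.Nonempty) {C : κ → Finset ι} (hC : ∀ i, (C i).Nonempty) {v : ι → α} {b : α}
    (hupper : ∀ i ∈ s, ∃ j ∈ C i, b ≤ v j) (hlower : ∃ i ∈ s, ∀ j ∈ C i, v j ≤ b) :
    s.inf' hs (fun i ↦ (C i).sup' (hC i) v) = b := by
  obtain ⟨i₀, hi₀, hC₀⟩ := hlower
  refine le_antisymm ((s.inf'_le _ hi₀).trans ((C i₀).sup'_le _ _ hC₀))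
    (s.le_inf' hs _ fun i hi ↦ ?_)
  obtain ⟨j, hj, hbj⟩ := hupper i hi
  exact (C i).le_sup'_of_le v hj hbj

theorem Convex.exists_inf'_sup'_eq_of_continuousOn {E ι : Type*} [AddCommGroup E] [Module ℝ E]
    [TopologicalSpace E] [IsTopologicalAddGroup E] [ContinuousSMul ℝ E] [Fintype ι] [Nonempty ι]
    {X : Set E} (hX : Convex ℝ X) {f : E → ℝ} (hf : ContinuousOn f X) (A : ι → E →ᵃ[ℝ] ℝ)
    (hsel : ∀ x ∈ X, ∃ j, f x = A j x) :
    ∃ (l : ℕ) (hl : 0 < l) (C : Fin l → Finset ι) (hC : ∀ i, (C i).Nonempty),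
      ∀ x ∈ X, f x = Finset.univ.inf' (Finset.univ_nonempty_iff.mpr ⟨⟨0, hl⟩⟩)
        (fun i ↦ (C i).sup' (hC i) (fun j ↦ A j x)) := by
  classical
  set T : Finset (Finset ι) :=
    Finset.univ.filter fun S ↦ S.Nonempty ∧ ∀ y ∈ X, ∃ j ∈ S, f y ≤ A j y
  have hT {S} : S ∈ T ↔ S.Nonempty ∧ ∀ y ∈ X, ∃ j ∈ S, f y ≤ A j y := by simp [T]
  have hactive : ∀ x ∈ X, Finset.univ.filter (fun j ↦ A j x ≤ f x) ∈ T := fun x hx ↦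
    hT.2 ⟨(hsel x hx).imp fun j hj ↦ by simp [hj],
      fun y hy ↦ (hX.exists_affineMap_le_le_of_continuousOn hf A hsel hx hy).imp
        fun j hj ↦ ⟨by simp [hj.1], hj.2⟩⟩
  have hT_nonempty : T.Nonempty := by
    rcases X.eq_empty_or_nonempty with rfl | ⟨x, hx⟩
    · exact ⟨Finset.univ, hT.2 ⟨Finset.univ_nonempty, by simp⟩⟩
    · exact ⟨_, hactive x hx⟩
  let C (i : Fin T.card) : Finset ι := T.equivFin.symm i
  have hC (i : Fin T.card) : C i ∈ T := (T.equivFin.symm i).2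
  refine ⟨T.card, hT_nonempty.card_pos, C, fun i ↦ (hT.1 (hC i)).1, fun x hx ↦ ?_⟩
  refine (Finset.inf'_sup'_eq_of_forall_exists_le _ _ (fun i _ ↦ (hT.1 (hC i)).2 x hx)
    ⟨T.equivFin ⟨_, hactive x hx⟩, Finset.mem_univ _, ?_⟩).symm
  simp [C]

theorem stmt_14_general (n m : ℕ) (hm : 0 < m)
    (X : Set (EuclideanSpace ℝ (Fin n))) (hXcv : Convex ℝ X)
    (c : Fin m → EuclideanSpace ℝ (Fin n)) (d : Fin m → ℝ)
    (f : EuclideanSpace ℝ (Fin n) → ℝ)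
    (hcont : ContinuousOn f X)
    (hsel : ∀ x ∈ X, ∃ j : Fin m, f x = ⟪c j, x⟫ + d j) :
    ∃ (l : ℕ) (hl : 0 < l) (C : Fin l → Finset (Fin m)) (hC : ∀ i, (C i).Nonempty),
      ∀ x ∈ X, f x = Finset.univ.inf' (Finset.univ_nonempty_iff.mpr ⟨⟨0, hl⟩⟩)
        (fun i => (C i).sup' (hC i) (fun j => ⟪c j, x⟫ + d j)) := by
  have : Nonempty (Fin m) := ⟨⟨0, hm⟩⟩
  let A (j : Fin m) : EuclideanSpace ℝ (Fin n) →ᵃ[ℝ] ℝ :=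
    (innerₛₗ ℝ (c j)).toAffineMap + AffineMap.const ℝ _ (d j)
  have hA (j : Fin m) (x : EuclideanSpace ℝ (Fin n)) : A j x = ⟪c j, x⟫ + d j := rfl
  simpa only [hA] using hXcv.exists_inf'_sup'_eq_of_continuousOn hcont A (by simpa only [hA])

/-- Min-max representation of continuous piecewise affine functions (Scholtes,
Prop. 2.2.2): a continuous function on a polytope that pointwise agrees with one
of finitely many affine selection functions admits a min-of-maxes representation
using those selection functions. -/
theorem stmt_14 (n m : ℕ) (hm : 0 < m)
    (X : Set (EuclideanSpace ℝ (Fin n))) (hXcv : Convex ℝ X) (hXcp : IsCompact X)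
    (c : Fin m → EuclideanSpace ℝ (Fin n)) (d : Fin m → ℝ)
    (f : EuclideanSpace ℝ (Fin n) → ℝ)
    (hcont : ContinuousOn f X)
    (hsel : ∀ x ∈ X, ∃ j : Fin m, f x = ⟪c j, x⟫ + d j) :
    ∃ (l : ℕ) (hl : 0 < l) (C : Fin l → Finset (Fin m)) (hC : ∀ i, (C i).Nonempty),
      ∀ x ∈ X, f x = Finset.univ.inf' (Finset.univ_nonempty_iff.mpr ⟨⟨0, hl⟩⟩)
        (fun i => (C i).sup' (hC i) (fun j => ⟪c j, x⟫ + d j)) :=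
  stmt_14_general n m hm X hXcv c d f hcont hsel
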